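/- If the vertical scaling function S is not identically zero on any subrectangle of D, then the upper vertical scaling matrix M̄_n is primitive for every n ∈ ℤ⁺. If moreover S is everywhere positive or everywhere negative on D, then M̲_n is primitive for every n ∈ ℤ⁺. -/

import Mathlib

open scoped BigOperators

noncomputable def oscil (φ : ℝ × ℝ → ℝ) (E : Set (ℝ × ℝ)) : ℝ :=
  sSup ((fun p : (ℝ × ℝ) × (ℝ × ℝ) => φ p.1 - φ p.2) '' (E ×ˢ E))

noncomputable def eudist (s t : ℝ × ℝ) : ℝ :=
  Real.sqrt ((s.1 - t.1) ^ 2 + (s.2 - t.2) ^ 2)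

noncomputable def uMap (x0 len : ℝ) (N : ℕ) (i : Fin N) (x : ℝ) : ℝ :=
  if i.val % 2 = 0 then x0 + i.val * (len / N) + (x - x0) / N
  else x0 + (i.val + 1) * (len / N) - (x - x0) / N

noncomputable def uInv (x0 len : ℝ) (N : ℕ) (i : Fin N) (y : ℝ) : ℝ :=
  if i.val % 2 = 0 then x0 + N * (y - (x0 + i.val * (len / N)))
  else x0 + N * ((x0 + (i.val + 1) * (len / N)) - y)

noncomputable def Lmap (x0 y0 len : ℝ) (N : ℕ) (w : Fin N × Fin N) (t : ℝ × ℝ) : ℝ × ℝ :=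
  (uMap x0 len N w.1 t.1, uMap y0 len N w.2 t.2)

noncomputable def LInv (x0 y0 len : ℝ) (N : ℕ) (w : Fin N × Fin N) (t : ℝ × ℝ) : ℝ × ℝ :=
  (uInv x0 len N w.1 t.1, uInv y0 len N w.2 t.2)

noncomputable def sqD (x0 y0 len : ℝ) : Set (ℝ × ℝ) :=
  Set.Icc x0 (x0 + len) ×ˢ Set.Icc y0 (y0 + len)

noncomputable def cell (x0 y0 len : ℝ) (N : ℕ) : List (Fin N × Fin N) → Set (ℝ × ℝ)
  | [] => sqD x0 y0 len
  | w :: ws => Lmap x0 y0 len N w '' cell x0 y0 len N ws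

noncomputable def oscSum (x0 y0 len : ℝ) (N : ℕ) (φ : ℝ × ℝ → ℝ)
    (p : List (Fin N × Fin N)) (k : ℕ) : ℝ :=
  ∑ w : Fin k → Fin N × Fin N, oscil φ (cell x0 y0 len N (p ++ List.ofFn w))

noncomputable def supAbs (S : ℝ × ℝ → ℝ) (E : Set (ℝ × ℝ)) : ℝ :=
  sSup ((fun t => |S t|) '' E)

noncomputable def infAbs (S : ℝ × ℝ → ℝ) (E : Set (ℝ × ℝ)) : ℝ :=
  sInf ((fun t => |S t|) '' E)

open Classical in
noncomputable def upMat (x0 y0 len : ℝ) (N : ℕ) (S : ℝ × ℝ → ℝ) (m : ℕ) :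
    Matrix (Fin (m + 1) → Fin N × Fin N) (Fin (m + 1) → Fin N × Fin N) ℝ :=
  fun i j =>
    if ∀ k : Fin m, i k.succ = j k.castSucc then
      supAbs S (cell x0 y0 len N (List.ofFn i ++ [j (Fin.last m)]))
    else 0

open Classical in
noncomputable def lowMat (x0 y0 len : ℝ) (N : ℕ) (S : ℝ × ℝ → ℝ) (m : ℕ) :
    Matrix (Fin (m + 1) → Fin N × Fin N) (Fin (m + 1) → Fin N × Fin N) ℝ :=
  fun i j =>
    if ∀ k : Fin m, i k.succ = j k.castSucc then
      infAbs S (cell x0 y0 len N (List.ofFn i ++ [j (Fin.last m)]))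
    else 0

def MatPrimitive {α : Type*} [Fintype α] [DecidableEq α] (A : Matrix α α ℝ) : Prop :=
  ∃ k : ℕ, 0 < k ∧ ∀ i j, 0 < (A ^ k) i j

/-! Each cell `D_𝐯` is a square of positive side inside `D`: the maps `uMap` are affine with
slope `±1/N` and preserve `[x0, x0 + len]`. Hence `|S|` has a positive supremum on every cell,
and, when `S` has constant sign, a positive infimum by compactness. So every entry of `M̄_n`
(resp. `M̲_n`) allowed by the shift condition is positive, and the allowed transitions form the
de Bruijn graph on words of length `n`, where any word reaches any other in exactly `n` steps. -/

namespace Matrix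

variable {n : Type*} [Fintype n] [DecidableEq n] {A : Matrix n n ℝ}

theorem pow_apply_pos_of_chain (hA : ∀ i j, 0 ≤ A i j) {k : ℕ} (w : Fin (k + 1) → n)
    (hw : ∀ t : Fin k, 0 < A (w t.castSucc) (w t.succ)) :
    0 < (A ^ k) (w 0) (w (Fin.last k)) := by
  induction k with
  | zero => simp [Fin.last]
  | succ k ih =>
    have hinit : 0 < (A ^ k) (w 0) (w (Fin.last k).castSucc) :=
      ih (fun t => w t.castSucc) fun t => by simpa only [Fin.succ_castSucc] using hw t.castSucc
    have hlast : 0 < A (w (Fin.last k).castSucc) (w (Fin.last (k + 1))) := hw (Fin.last k)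
    rw [pow_succ, mul_apply]
    exact (mul_pos hinit hlast).trans_le <|
      Finset.single_le_sum (f := fun l => (A ^ k) (w 0) l * A l (w (Fin.last (k + 1))))
        (fun l _ => mul_nonneg (pow_apply_nonneg hA k _ _) (hA _ _)) (Finset.mem_univ _)

end Matrix

theorem matPrimitive_of_shift_pos {β : Type*} [Fintype β] [DecidableEq β] {m : ℕ}
    {A : Matrix (Fin (m + 1) → β) (Fin (m + 1) → β) ℝ} (hA : ∀ i j, 0 ≤ A i j)
    (hshift : ∀ i j, (∀ k : Fin m, i k.succ = j k.castSucc) → 0 < A i j) :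
    MatPrimitive A := by
  refine ⟨m + 1, m.succ_pos, fun i j => ?_⟩
  -- `w t` is the window of width `m + 1` at offset `t` in the concatenated word `i ++ j`
  let w : Fin (m + 2) → Fin (m + 1) → β := fun t p =>
    Fin.append i j ⟨p + t, by omega⟩
  have hw0 : w 0 = i := funext fun p => Fin.append_left i j p
  have hwlast : w (Fin.last (m + 1)) = j := funext fun p => by
    simpa [w, Fin.natAdd, add_comm] using Fin.append_right i j p
  have hchain : ∀ t : Fin (m + 1), 0 < A (w t.castSucc) (w t.succ) := fun t =>
    hshift _ _ fun k => congrArg (Fin.append i j) <| Fin.ext <| by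
      simp only [Fin.val_succ, Fin.val_castSucc]; omega
  simpa only [hw0, hwlast] using Matrix.pow_apply_pos_of_chain hA w hchain

open Set

section Cells

variable {x0 y0 len : ℝ} {N : ℕ}

theorem uMap_mapsTo (hlen : 0 ≤ len) (i : Fin N) :
    MapsTo (uMap x0 len N i) (Icc x0 (x0 + len)) (Icc x0 (x0 + len)) := by
  intro x ⟨hx0, hx1⟩
  have hN : (0 : ℝ) < N := by exact_mod_cast i.pos
  have hiN : (i : ℝ) + 1 ≤ N := by exact_mod_cast i.isLt
  have hstep : 0 ≤ (x - x0) / N ∧ (x - x0) / N ≤ len / N :=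
    ⟨by positivity, by gcongr; linarith⟩
  have hi : 0 ≤ (i : ℝ) * (len / N) ∧ ((i : ℝ) + 1) * (len / N) ≤ len :=
    ⟨by positivity, by rw [mul_div_assoc', div_le_iff₀ hN]; nlinarith⟩
  unfold uMap
  split_ifs <;> constructor <;> nlinarith

theorem uMap_image_Icc (i : Fin N) (a s : ℝ) :
    ∃ a', uMap x0 len N i '' Icc a (a + s) = Icc a' (a' + s / N) := by
  have hN : (0 : ℝ) < 1 / N := by have := i.pos; positivity
  by_cases hi : i.val % 2 = 0
  · have hf : uMap x0 len N i = fun x => 1 / N * x + (x0 + i * (len / N) - x0 / N) := by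
      funext x; simp only [uMap, if_pos hi]; ring
    refine ⟨1 / N * a + (x0 + i * (len / N) - x0 / N), ?_⟩
    rw [hf, image_affine_Icc' hN]
    congr 1; ring
  · have hf : uMap x0 len N i =
        (fun y => x0 + (i + 1) * (len / N) + x0 / N - y) ∘ fun x => 1 / N * x := by
      funext x; simp only [uMap, if_neg hi, Function.comp]; ring
    refine ⟨x0 + (i + 1) * (len / N) + x0 / N - 1 / N * (a + s), ?_⟩
    rw [hf, image_comp, image_mul_left_Icc' hN, image_const_sub_Icc]
    congr 1; ring

theorem cell_subset_sqD (hlen : 0 ≤ len) : ∀ w, cell x0 y0 len N w ⊆ sqD x0 y0 len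
  | [] => subset_rfl
  | p :: w => ((uMap_mapsTo hlen p.1).prodMap (uMap_mapsTo hlen p.2)).image_subset.trans'
      (image_mono (cell_subset_sqD hlen w))

theorem exists_cell_eq_square (hlen : 0 < len) :
    ∀ w, ∃ a c s, 0 < s ∧ cell x0 y0 len N w = Icc a (a + s) ×ˢ Icc c (c + s)
  | [] => ⟨x0, y0, len, hlen, rfl⟩
  | p :: w => by
    obtain ⟨a, c, s, hs, hw⟩ := exists_cell_eq_square hlen w
    obtain ⟨a', ha'⟩ := uMap_image_Icc (x0 := x0) (len := len) p.1 a s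
    obtain ⟨c', hc'⟩ := uMap_image_Icc (x0 := y0) (len := len) p.2 c s
    have := p.1.pos
    refine ⟨a', c', s / N, by positivity, ?_⟩
    rw [cell, hw, ← ha', ← hc', prod_image_image_eq]
    rfl

theorem isCompact_cell (hlen : 0 < len) (w : List (Fin N × Fin N)) :
    IsCompact (cell x0 y0 len N w) := by
  obtain ⟨a, c, s, -, hw⟩ := exists_cell_eq_square (x0 := x0) (y0 := y0) hlen w
  exact hw ▸ isCompact_Icc.prod isCompact_Icc

theorem exists_mem_cell_ne_zero {S : ℝ × ℝ → ℝ} (hlen : 0 < len)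
    (hNZ : ∀ a b c d : ℝ, x0 ≤ a → a < b → b ≤ x0 + len → y0 ≤ c → c < d → d ≤ y0 + len →
      ∃ t ∈ Icc a b ×ˢ Icc c d, S t ≠ 0)
    (w : List (Fin N × Fin N)) : ∃ t ∈ cell x0 y0 len N w, S t ≠ 0 := by
  obtain ⟨a, c, s, hs, hw⟩ := exists_cell_eq_square (x0 := x0) (y0 := y0) hlen w
  have hsub := hw ▸ cell_subset_sqD hlen.le w
  have hs' {u : ℝ} : u ≤ u + s := le_add_of_nonneg_right hs.le
  obtain ⟨⟨ha, -⟩, hc, -⟩ := hsub (mk_mem_prod (left_mem_Icc.2 hs') (left_mem_Icc.2 hs'))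
  obtain ⟨⟨-, hb⟩, -, hd⟩ := hsub (mk_mem_prod (right_mem_Icc.2 hs') (right_mem_Icc.2 hs'))
  exact hw ▸ hNZ a (a + s) c (c + s) ha (by linarith) hb hc (by linarith) hd

end Cells

theorem supAbs_pos {S : ℝ × ℝ → ℝ} {E : Set (ℝ × ℝ)} {t : ℝ × ℝ}
    (hbdd : BddAbove ((fun t => |S t|) '' E)) (ht : t ∈ E) (hSt : S t ≠ 0) :
    0 < supAbs S E :=
  (abs_pos.2 hSt).trans_le (le_csSup hbdd ⟨t, ht, rfl⟩)

theorem infAbs_pos {S : ℝ × ℝ → ℝ} {E : Set (ℝ × ℝ)} (hE : IsCompact E) (hne : E.Nonempty)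
    (hS : ContinuousOn S E) (hS0 : ∀ t ∈ E, S t ≠ 0) : 0 < infAbs S E := by
  obtain ⟨t, ht, hmin⟩ := (hE.image_of_continuousOn hS.abs).sInf_mem (hne.image _)
  rw [infAbs, ← hmin]
  exact abs_pos.2 (hS0 t ht)

/- `upMat` and `lowMat` are this matrix for `F = supAbs S` and `F = infAbs S`; `open Classical`
makes the `if` elaborate with the same decidability instance as in their definitions. -/
open Classical in
theorem matPrimitive_of_cell_pos {x0 y0 len : ℝ} {N m : ℕ} {F : Set (ℝ × ℝ) → ℝ}
    (hF : ∀ w, 0 < F (cell x0 y0 len N w)) :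
    MatPrimitive fun i j : Fin (m + 1) → Fin N × Fin N =>
      if ∀ k : Fin m, i k.succ = j k.castSucc then
        F (cell x0 y0 len N (List.ofFn i ++ [j (Fin.last m)]))
      else 0 := by
  refine matPrimitive_of_shift_pos (fun i j => ?_) fun i j hij => ?_
  · split_ifs
    exacts [(hF _).le, le_rfl]
  · simpa only [if_pos hij] using hF _

theorem scaling_matrices_primitive_general (x0 y0 len : ℝ) (hlen : 0 < len) (N : ℕ)
    (S : ℝ × ℝ → ℝ) (hS : ContinuousOn S (sqD x0 y0 len))
    (hNZ : ∀ a b c d : ℝ, x0 ≤ a → a < b → b ≤ x0 + len → y0 ≤ c → c < d → d ≤ y0 + len →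
      ∃ t ∈ Set.Icc a b ×ˢ Set.Icc c d, S t ≠ 0) :
    (∀ m : ℕ, MatPrimitive (upMat x0 y0 len N S m)) ∧
    (((∀ t ∈ sqD x0 y0 len, 0 < S t) ∨ (∀ t ∈ sqD x0 y0 len, S t < 0)) →
      ∀ m : ℕ, MatPrimitive (lowMat x0 y0 len N S m)) := by
  have hsub := cell_subset_sqD (x0 := x0) (y0 := y0) (N := N) hlen.le
  have hne := exists_mem_cell_ne_zero (N := N) hlen hNZ
  have hbdd : BddAbove ((fun t => |S t|) '' sqD x0 y0 len) :=
    (isCompact_Icc.prod isCompact_Icc).bddAbove_image hS.abs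
  refine ⟨fun m => matPrimitive_of_cell_pos fun w => ?_, fun hsign m =>
    matPrimitive_of_cell_pos fun w => ?_⟩
  · obtain ⟨t, ht, hSt⟩ := hne w
    exact supAbs_pos (hbdd.mono (image_mono (hsub w))) ht hSt
  · have hS0 : ∀ t ∈ sqD x0 y0 len, S t ≠ 0 := fun t ht =>
      hsign.elim (fun h => (h t ht).ne') fun h => (h t ht).ne
    obtain ⟨t, ht, -⟩ := hne w
    exact infAbs_pos (isCompact_cell hlen w) ⟨t, ht⟩ (hS.mono (hsub w))
      fun u hu => hS0 u (hsub w hu)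

/-- if S is not identically zero on any subrectangle of D then every upper
vertical scaling matrix is primitive; if moreover S has constant sign, so is every lower one. -/
theorem scaling_matrices_primitive (x0 y0 len : ℝ) (hlen : 0 < len) (N : ℕ) (hN : 2 ≤ N)
    (S : ℝ × ℝ → ℝ) (hS : ContinuousOn S (sqD x0 y0 len))
    (hS1 : ∀ t ∈ sqD x0 y0 len, |S t| < 1)
    (hNZ : ∀ a b c d : ℝ, x0 ≤ a → a < b → b ≤ x0 + len → y0 ≤ c → c < d → d ≤ y0 + len →
      ∃ t ∈ Set.Icc a b ×ˢ Set.Icc c d, S t ≠ 0) :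
    (∀ m : ℕ, MatPrimitive (upMat x0 y0 len N S m)) ∧
    (((∀ t ∈ sqD x0 y0 len, 0 < S t) ∨ (∀ t ∈ sqD x0 y0 len, S t < 0)) →
      ∀ m : ℕ, MatPrimitive (lowMat x0 y0 len N S m)) :=
  scaling_matrices_primitive_general x0 y0 len hlen N S hS hNZ
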